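/- arXiv:1608.05518 — 2 statements merged into one kernel-verified Lean document; each statement's English description precedes it below -/
import Mathlib

section
/- In the setting of the previous lemma (P₁ = (I 0), P₂ = (A b) a camera, subset σ and vectors v_i as there), if in addition b ≠ 0, then the finite camera P₂' and points v_i' ∈ ℝ³ realizing the finite reconstruction can be chosen so that P₁ and P₂' are non-coincident cameras. -/
open Matrix

noncomputable section

/-- For `u ∈ ℝⁿ`, `hat u = (u, 1)ᵀ ∈ ℝⁿ⁺¹`. -/
def hat {n : ℕ} (u : Fin n → ℝ) : Fin (n + 1) → ℝ := Fin.snoc u 1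

/-- The 3×4 matrix `(A b)` with left 3×3 block `A` and last column `b`. -/
def cam (A : Matrix (Fin 3) (Fin 3) ℝ) (b : Fin 3 → ℝ) : Matrix (Fin 3) (Fin 4) ℝ :=
  Matrix.of fun i => Fin.snoc (A i) (b i)

/-- The left 3×3 block of a 3×4 matrix. -/
def leftBlock (P : Matrix (Fin 3) (Fin 4) ℝ) : Matrix (Fin 3) (Fin 3) ℝ :=
  P.submatrix id Fin.castSucc

/-- A (projective) camera is a real 3×4 matrix of rank 3. -/
def IsCamera (P : Matrix (Fin 3) (Fin 4) ℝ) : Prop := P.rank = 3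

/-- A finite camera: the left 3×3 block is nonsingular. -/
def IsFiniteCamera (P : Matrix (Fin 3) (Fin 4) ℝ) : Prop := IsUnit (leftBlock P).det

/-- Two cameras are coincident if their camera centers agree up to a nonzero scale;
for rank-3 cameras the center is the (one-dimensional) kernel, so this says the two
cameras share a common nonzero kernel vector. -/
def Coincident (P Q : Matrix (Fin 3) (Fin 4) ℝ) : Prop :=
  ∃ c : Fin 4 → ℝ, c ≠ 0 ∧ P.mulVec c = 0 ∧ Q.mulVec c = 0

/-- `u` is a nonzero scalar multiple of `v`. -/
def SimEq {n : ℕ} (u v : Fin n → ℝ) : Prop := ∃ c : ℝ, c ≠ 0 ∧ u = c • v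

/-- The skew-symmetric matrix `[v]ₓ` with `[v]ₓ w = v × w`. -/
def skew (v : Fin 3 → ℝ) : Matrix (Fin 3) (Fin 3) ℝ :=
  !![0, -v 2, v 1; v 2, 0, -v 0; -v 1, v 0, 0]

/-- `(x, y)` is `(A, b)`-irregular. -/
def Irregular (A : Matrix (Fin 3) (Fin 3) ℝ) (b : Fin 3 → ℝ) (x y : Fin 2 → ℝ) : Prop :=
  ((skew b * A).mulVec (hat x) = 0 ∧ Matrix.vecMul (hat y) (skew b) ≠ 0) ∨
  ((skew b * A).mulVec (hat x) ≠ 0 ∧ Matrix.vecMul (hat y) (skew b) = 0)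

/-!
Apply the projective transformation `H_c = [[I, 0], [cᵀ, 1]]` for a generic `c ∈ ℝ³`. It fixes
`P₁ = (I 0)`, turns `P₂ = (A b)` into `(A + b cᵀ, b)`, and replaces each reconstructed point
`z = (v, s) ∈ ℝ⁴` by `H_c⁻¹ z = (v, s - c ⬝ᵥ v)`, which is a finite point iff
`s - c ⬝ᵥ v ≠ 0`. The new camera is finite exactly when `H_c⁻¹` also sends the center of `P₂` to a
finite point. These are finitely many conditions on `c`, each satisfiable because the points and
the center are nonzero, so a common `c` exists. Finally the center `(0, 1)` of `P₁` is mapped by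
`(A + b cᵀ, b)` to `b ≠ 0`, so the two cameras are not coincident.
-/

/-- The last coordinate of `H_c⁻¹ z`, where `H_c = [[I, 0], [cᵀ, 1]]`. -/
def shearWeight {n : ℕ} (c : Fin n → ℝ) (z : Fin (n + 1) → ℝ) : ℝ :=
  z (Fin.last n) - c ⬝ᵥ Fin.init z

@[simp]
lemma shearWeight_snoc {n : ℕ} (c v : Fin n → ℝ) (s : ℝ) :
    shearWeight c (Fin.snoc v s) = s - c ⬝ᵥ v := by
  simp [shearWeight]

lemma shearWeight_smul {n : ℕ} (c : Fin n → ℝ) (t : ℝ) (z : Fin (n + 1) → ℝ) :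
    shearWeight c (t • z) = t * shearWeight c z := by
  rw [shearWeight, shearWeight, mul_sub, ← smul_eq_mul t (c ⬝ᵥ _), ← dotProduct_smul]
  rfl

lemma dotProduct_eq_init_add_last {n : ℕ} (r z : Fin (n + 1) → ℝ) :
    r ⬝ᵥ z = Fin.init r ⬝ᵥ Fin.init z + r (Fin.last n) * z (Fin.last n) := by
  simp [dotProduct, Fin.sum_univ_castSucc, Fin.init]

/-- A linear form that vanishes on none of the `z j` nor on the last basis vector is, after
normalising its last coefficient to `1`, of the form `z ↦ shearWeight c z`. -/
lemma exists_forall_shearWeight_ne_zero {ι : Type*} [Finite ι] {n : ℕ}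
    (z : ι → Fin (n + 1) → ℝ) (hz : ∀ j, z j ≠ 0) :
    ∃ c : Fin n → ℝ, ∀ j, shearWeight c (z j) ≠ 0 := by
  classical
  obtain ⟨r, hr⟩ := Module.Dual.exists_forall_ne_zero_of_forall_exists
    (fun j : Option ι => dotProductEquiv ℝ (Fin (n + 1)) (j.elim (Pi.single (Fin.last n) 1) z))
    (by
      rintro (_ | j)
      · exact ⟨Pi.single (Fin.last n) 1, by simp⟩
      · exact ⟨z j, by simpa using hz j⟩)
  have hlast : r (Fin.last n) ≠ 0 := by simpa using hr none
  refine ⟨-(r (Fin.last n))⁻¹ • Fin.init r, fun j hj => hr (some j) ?_⟩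
  have key : shearWeight (-(r (Fin.last n))⁻¹ • Fin.init r) (z j) =
      (r (Fin.last n))⁻¹ * (z j ⬝ᵥ r) := by
    rw [shearWeight, dotProduct_eq_init_add_last, dotProduct_comm (Fin.init (z j)), neg_smul,
      neg_dotProduct, smul_dotProduct, smul_eq_mul]
    field_simp
    ring
  rw [key, mul_eq_zero, inv_eq_zero] at hj
  simpa [hlast] using hj

lemma IsCamera.exists_ker_eq_span {P : Matrix (Fin 3) (Fin 4) ℝ} (hP : IsCamera P) :
    ∃ w ≠ 0, LinearMap.ker P.mulVecLin = ℝ ∙ w := by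
  have hrank := LinearMap.finrank_range_add_finrank_ker P.mulVecLin
  rw [← Matrix.rank, hP, Module.finrank_fin_fun] at hrank
  have hker : Module.finrank ℝ (LinearMap.ker P.mulVecLin) = 1 := by omega
  obtain ⟨w, hw0, hw⟩ := finrank_eq_one_iff'.1 hker
  refine ⟨w, by simpa using hw0, le_antisymm (fun z hz => ?_) ?_⟩
  · obtain ⟨t, ht⟩ := hw ⟨z, hz⟩
    exact Submodule.mem_span_singleton.2 ⟨t, congrArg Subtype.val ht⟩
  · exact (Submodule.span_singleton_le_iff_mem _ _).2 w.2

lemma hat_ne_zero {n : ℕ} (u : Fin n → ℝ) : hat u ≠ 0 := fun h => by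
  simpa [hat] using congrFun h (Fin.last n)

lemma cam_mulVec (A : Matrix (Fin 3) (Fin 3) ℝ) (b : Fin 3 → ℝ) (z : Fin 4 → ℝ) :
    cam A b *ᵥ z = A *ᵥ Fin.init z + z (Fin.last 3) • b := by
  ext i
  simp only [cam, mulVec, dotProduct, Fin.sum_univ_castSucc, of_apply, Fin.snoc_castSucc,
    Fin.snoc_last, Pi.add_apply, Pi.smul_apply, smul_eq_mul, Fin.init]
  ring

lemma leftBlock_cam (A : Matrix (Fin 3) (Fin 3) ℝ) (b : Fin 3 → ℝ) :
    leftBlock (cam A b) = A := by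
  ext i j
  simp [leftBlock, cam]

lemma not_coincident_cam_one_zero {A : Matrix (Fin 3) (Fin 3) ℝ} {b : Fin 3 → ℝ} (hb : b ≠ 0) :
    ¬ Coincident (cam 1 0) (cam A b) := by
  rintro ⟨d, hd0, h1, h2⟩
  rw [cam_mulVec] at h1 h2
  simp only [one_mulVec, smul_zero, add_zero] at h1
  rw [h1, mulVec_zero, zero_add, smul_eq_zero] at h2
  refine hd0 (funext fun j => Fin.lastCases ?_ (fun j => ?_) j)
  · exact h2.resolve_right hb
  · exact congrFun h1 j

/-- A kernel vector `u` of `A + b cᵀ` gives the kernel vector `(u, c ⬝ᵥ u)` of `(A b)`, whose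
shear weight vanishes. -/
lemma isUnit_det_add_vecMulVec {A : Matrix (Fin 3) (Fin 3) ℝ} {b c : Fin 3 → ℝ}
    {w : Fin 4 → ℝ} (hw : LinearMap.ker (cam A b).mulVecLin = ℝ ∙ w)
    (hc : shearWeight c w ≠ 0) : IsUnit (A + vecMulVec b c).det := by
  rw [isUnit_iff_ne_zero]
  intro hdet
  obtain ⟨u, hu0, hu⟩ := exists_mulVec_eq_zero_iff.2 hdet
  have hker : Fin.snoc u (c ⬝ᵥ u) ∈ ℝ ∙ w := by
    rw [← hw, LinearMap.mem_ker, mulVecLin_apply, cam_mulVec, Fin.init_snoc, Fin.snoc_last]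
    simpa [add_mulVec, vecMulVec_mulVec] using hu
  obtain ⟨t, ht⟩ := Submodule.mem_span_singleton.1 hker
  have hweight : t * shearWeight c w = 0 := by
    simpa [shearWeight_smul] using congrArg (shearWeight c) ht
  obtain rfl : t = 0 := (mul_eq_zero.1 hweight).resolve_right hc
  rw [zero_smul] at ht
  exact hu0 (funext fun j => by simpa using congrFun ht.symm j.castSucc)

lemma SimEq.smul_left {n : ℕ} {u v : Fin n → ℝ} (h : SimEq u v) {a : ℝ} (ha : a ≠ 0) :
    SimEq (a • u) v := by
  obtain ⟨t, ht, rfl⟩ := h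
  exact ⟨a * t, mul_ne_zero ha ht, smul_smul a t v⟩

lemma SimEq.cam_add_vecMulVec {A : Matrix (Fin 3) (Fin 3) ℝ} {b : Fin 3 → ℝ} {z : Fin 4 → ℝ}
    {p : Fin 3 → ℝ} (h : SimEq (cam A b *ᵥ z) p) {c : Fin 3 → ℝ} (hc : shearWeight c z ≠ 0) :
    SimEq (cam (A + vecMulVec b c) b *ᵥ hat ((shearWeight c z)⁻¹ • Fin.init z)) p := by
  convert h.smul_left (inv_ne_zero hc) using 1
  have hlast : z (Fin.last 3) = shearWeight c z + c ⬝ᵥ Fin.init z := by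
    rw [shearWeight]
    ring
  ext i
  simp only [cam_mulVec, hat, Fin.init_snoc, Fin.snoc_last, add_mulVec, vecMulVec_mulVec,
    mulVec_smul, MulOpposite.smul_eq_mul_unop, MulOpposite.unop_op,
    Pi.add_apply, Pi.smul_apply, smul_eq_mul, hlast]
  field_simp
  ring

/-- As in the previous lemma, but if moreover `b ≠ 0` then the finite camera `P₂'` can be
chosen non-coincident with `P₁ = (I 0)`. -/
theorem stmt2 (m : ℕ) (x y : Fin m → Fin 2 → ℝ)
    (A : Matrix (Fin 3) (Fin 3) ℝ) (b : Fin 3 → ℝ)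
    (hP2 : IsCamera (cam A b)) (hb : b ≠ 0)
    (σ : Finset (Fin m)) (v : Fin m → Fin 3 → ℝ)
    (hσ : ∀ i ∈ σ, v i ≠ 0 ∧
      SimEq ((cam 1 0).mulVec (Fin.snoc (v i) 0)) (hat (x i)) ∧
      SimEq ((cam A b).mulVec (Fin.snoc (v i) 0)) (hat (y i)))
    (hσc : ∀ i ∉ σ,
      SimEq ((cam 1 0).mulVec (hat (v i))) (hat (x i)) ∧
      SimEq ((cam A b).mulVec (hat (v i))) (hat (y i))) :
    ∃ (P₂' : Matrix (Fin 3) (Fin 4) ℝ) (v' : Fin m → Fin 3 → ℝ),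
      IsFiniteCamera P₂' ∧ ¬ Coincident (cam 1 0) P₂' ∧ ∀ i,
        SimEq ((cam 1 0).mulVec (hat (v' i))) (hat (x i)) ∧
        SimEq (P₂'.mulVec (hat (v' i))) (hat (y i)) := by
  classical
  set z : Fin m → Fin 4 → ℝ := fun i => Fin.snoc (v i) (if i ∈ σ then 0 else 1)
  have hz : ∀ i, z i ≠ 0 ∧ SimEq (cam 1 0 *ᵥ z i) (hat (x i)) ∧
      SimEq (cam A b *ᵥ z i) (hat (y i)) := by
    intro i
    by_cases hi : i ∈ σ
    · obtain ⟨hv, hx, hy⟩ := hσ i hi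
      have hzi : z i = Fin.snoc (v i) 0 := by simp [z, hi]
      refine hzi ▸ ⟨fun h => hv (funext fun j => ?_), hx, hy⟩
      simpa using congrFun h j.castSucc
    · have hzi : z i = hat (v i) := by simp [z, hi, hat]
      exact hzi ▸ ⟨hat_ne_zero _, hσc i hi⟩
  obtain ⟨w, hw0, hw⟩ := hP2.exists_ker_eq_span
  obtain ⟨c, hc⟩ := exists_forall_shearWeight_ne_zero (fun j : Option (Fin m) => j.elim w z)
    (by rintro (_ | i); exacts [hw0, (hz i).1])
  refine ⟨cam (A + vecMulVec b c) b, fun i => (shearWeight c (z i))⁻¹ • Fin.init (z i), ?_,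
    not_coincident_cam_one_zero hb, fun i => ⟨?_, (hz i).2.2.cam_add_vecMulVec (hc (some i))⟩⟩
  · rw [IsFiniteCamera, leftBlock_cam]
    exact isUnit_det_add_vecMulVec hw (hc none)
  · simpa using (hz i).2.1.cam_add_vecMulVec (hc (some i))
end
end

section
/- Let (x_i, y_i) ∈ ℝ² × ℝ², i = 1,…,m, be given. There exists a finite reconstruction (P₁ = (I 0), P₂, {ŵ_i}) of {(x_i,y_i)} with w_i ∈ ℝ³ in which P₁ and P₂ are coincident cameras if and only if {x_i} is projectively equivalent to {y_i}, i.e., there is a nonsingular H ∈ ℝ^{3×3} with H x̂_i a nonzero scalar multiple of ŷ_i for all i = 1,…,m. -/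
/-!
The centre of `(I 0)` is `(0, 1)ᵀ` and `(A b)` maps it to `b`, so a second camera coincident
with `(I 0)` has the form `(A 0)`. Then `(I 0) ŵᵢ = wᵢ ∼ x̂ᵢ` and `(A 0) ŵᵢ = A wᵢ ∼ ŷᵢ`, so `A`
is the required homography, finite cameras giving a nonsingular `A`. Conversely, for a
homography `H` take `P₂ = (H 0)` and `wᵢ = x̂ᵢ`.
-/

open Matrix

noncomputable section

lemma SimEq.refl {n : ℕ} (u : Fin n → ℝ) : SimEq u u :=
  ⟨1, one_ne_zero, (one_smul ℝ u).symm⟩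

lemma SimEq.symm {n : ℕ} {u v : Fin n → ℝ} (h : SimEq u v) : SimEq v u := by
  obtain ⟨c, hc, rfl⟩ := h
  exact ⟨c⁻¹, inv_ne_zero hc, by rw [smul_smul, inv_mul_cancel₀ hc, one_smul]⟩

lemma SimEq.trans {n : ℕ} {u v w : Fin n → ℝ} (huv : SimEq u v) (hvw : SimEq v w) :
    SimEq u w := by
  obtain ⟨c, hc, rfl⟩ := huv
  obtain ⟨d, hd, rfl⟩ := hvw
  exact ⟨c * d, mul_ne_zero hc hd, smul_smul c d w⟩

lemma SimEq.mulVec {k n : ℕ} (A : Matrix (Fin k) (Fin n) ℝ) {u v : Fin n → ℝ}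
    (h : SimEq u v) : SimEq (A *ᵥ u) (A *ᵥ v) := by
  obtain ⟨c, hc, rfl⟩ := h
  exact ⟨c, hc, Matrix.mulVec_smul A c v⟩

lemma cam_mulVec_snoc (A : Matrix (Fin 3) (Fin 3) ℝ) (b v : Fin 3 → ℝ) (t : ℝ) :
    cam A b *ᵥ Fin.snoc v t = A *ᵥ v + t • b := by
  funext i
  simp [cam, Matrix.mulVec, dotProduct, Fin.sum_univ_castSucc, mul_comm, -Fin.reduceLast]

lemma cam_mulVec_hat (A : Matrix (Fin 3) (Fin 3) ℝ) (b v : Fin 3 → ℝ) :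
    cam A b *ᵥ hat v = A *ᵥ v + b := by
  rw [hat, cam_mulVec_snoc, one_smul]

lemma cam_leftBlock (P : Matrix (Fin 3) (Fin 4) ℝ) :
    cam (leftBlock P) (fun i => P i (Fin.last 3)) = P := by
  ext i j
  refine Fin.lastCases ?_ (fun j => ?_) j <;> simp [cam, leftBlock, -Fin.reduceLast]

lemma coincident_cam_one_zero_iff (A : Matrix (Fin 3) (Fin 3) ℝ) (b : Fin 3 → ℝ) :
    Coincident (cam 1 0) (cam A b) ↔ b = 0 := by
  constructor
  · rintro ⟨c, hc, h₁, h₂⟩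
    rw [← Fin.snoc_init_self c, cam_mulVec_snoc] at h₁ h₂
    have hinit : Fin.init c = 0 := by simpa using h₁
    have hlast : c (Fin.last 3) ≠ 0 := fun h0 ↦
      hc (funext (Fin.lastCases h0 (congrFun hinit)))
    rw [hinit, Matrix.mulVec_zero, zero_add] at h₂
    exact (smul_eq_zero.1 h₂).resolve_left hlast
  · rintro rfl
    refine ⟨Fin.snoc 0 1, fun h ↦ ?_, ?_, ?_⟩
    · simpa [-Fin.reduceLast] using congrFun h (Fin.last 3)
    all_goals simp [cam_mulVec_snoc]

/-- A finite reconstruction with first camera `(I 0)` and coincident cameras exists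
iff the two point sets are projectively equivalent. -/
theorem stmt6 (m : ℕ) (x y : Fin m → Fin 2 → ℝ) :
    (∃ P₂ : Matrix (Fin 3) (Fin 4) ℝ, IsFiniteCamera P₂ ∧ Coincident (cam 1 0) P₂ ∧
      ∃ w : Fin m → Fin 3 → ℝ, ∀ i,
        SimEq ((cam 1 0).mulVec (hat (w i))) (hat (x i)) ∧
        SimEq (P₂.mulVec (hat (w i))) (hat (y i))) ↔
    (∃ H : Matrix (Fin 3) (Fin 3) ℝ, IsUnit H.det ∧
      ∀ i, SimEq (H.mulVec (hat (x i))) (hat (y i))) := by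
  constructor
  · rintro ⟨P₂, hfin, hco, w, hw⟩
    rw [← cam_leftBlock P₂] at hco hw
    rw [(coincident_cam_one_zero_iff _ _).1 hco] at hw
    refine ⟨leftBlock P₂, hfin, fun i ↦ ?_⟩
    obtain ⟨hx, hy⟩ := hw i
    simp only [cam_mulVec_hat, Matrix.one_mulVec, add_zero] at hx hy
    exact (hx.symm.mulVec _).trans hy
  · rintro ⟨H, hH, hxy⟩
    refine ⟨cam H 0, ?_, (coincident_cam_one_zero_iff H 0).2 rfl, fun i ↦ hat (x i),
      fun i ↦ ?_⟩
    · rwa [IsFiniteCamera, leftBlock_cam]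
    · simp only [cam_mulVec_hat, Matrix.one_mulVec, add_zero]
      exact ⟨SimEq.refl _, hxy i⟩
end
end
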